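/- arXiv:1504.02410 — 2 statements merged into one kernel-verified Lean document; each statement's English description precedes it below -/
import Mathlib

section
/- Let ε : ℕ → ℝ satisfy ε(n) → 0 as n → ∞, and for each i ∈ ℕ let N_i = ((3+2√2)^{2i+1} − (3−2√2)^{2i+1})/(4√2). Then each N_i is an odd positive integer, and for infinitely many indices i the number N_i is not the sum of two elements of A(ε,√2). -/
open Filter
open scoped Pointwise

/-- Distance to the nearest integer. -/
noncomputable def fpa (t : ℝ) : ℝ := |t - round t|

/-- `A ε α = {n ∈ ℕ : ‖α n²‖ ≤ ε n}`. -/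
def A (ε : ℕ → ℝ) (α : ℝ) : Set ℕ := {n : ℕ | fpa (α * (n : ℝ) ^ 2) ≤ ε n}

/-- `Nval i = ((3+2√2)^(2i+1) − (3−2√2)^(2i+1)) / (4√2)`. -/
noncomputable def Nval (i : ℕ) : ℝ :=
  ((3 + 2 * Real.sqrt 2) ^ (2 * i + 1) - (3 - 2 * Real.sqrt 2) ^ (2 * i + 1)) /
    (4 * Real.sqrt 2)

/-!
Write `xᵢ + yᵢ√2 = (1 + √2)^(2i+1)`, so that `xᵢ² + 1 = 2yᵢ²`, `Nᵢ = xᵢyᵢ` and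
`δᵢ = yᵢ√2 - xᵢ = (√2 - 1)^(2i+1) → 0`. If `a + b = Nᵢ`, the Pell equation gives
`√2 a² ≡ √2 b² + 1/2 - c (mod 1)` with `c = (Nᵢ/2 - b) δᵢ²`, and `0 ≤ c ≤ √2/16` when `b ≤ a`.
So `√2 a²` and `√2 b²` cannot both be close to integers, which settles the case of large `b`,
where `ε a` and `ε b` are small. For each of the finitely many small values `b = k`,
`c → √2/16` as `i → ∞`, so `‖√2 a²‖` tends to `‖√2 k² + 1/2 - √2/16‖`, which is positive
because `√2` is irrational, while `ε a → 0`.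
-/

open Topology

lemma fpa_eq_norm (t : ℝ) : fpa t = ‖(t : UnitAddCircle)‖ := UnitAddCircle.norm_eq.symm

lemma mem_A_iff {ε : ℕ → ℝ} {α : ℝ} {n : ℕ} :
    n ∈ A ε α ↔ ‖((α * n ^ 2 : ℝ) : UnitAddCircle)‖ ≤ ε n := by
  rw [← fpa_eq_norm]; rfl

lemma sqrt_two_sq : √2 ^ 2 = 2 := Real.sq_sqrt zero_le_two

lemma Nat.odd_mul_of_sq_add_one_eq_two_mul_sq {x y : ℕ} (h : x ^ 2 + 1 = 2 * y ^ 2) :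
    Odd (x * y) := by
  have hx : Odd x := by
    by_contra hx
    rw [Nat.not_odd_iff_even] at hx
    have : Even (x ^ 2 + 1) := h ▸ even_two_mul _
    simp [Nat.even_add_one, hx, Nat.even_pow] at this
  obtain ⟨k, rfl⟩ := hx
  have hy : y ^ 2 = 2 * (k ^ 2 + k) + 1 := by nlinarith
  have : Odd (y ^ 2) := hy ▸ odd_two_mul_add_one _
  exact Odd.mul ⟨k, rfl⟩ ((Nat.odd_pow_iff two_ne_zero).1 this)

lemma mul_mul_sq_sub_div_two {x y : ℝ} (h : x ^ 2 + 1 = 2 * y ^ 2) :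
    x * y * (y * √2 - x) ^ 2 / 2 = √2 / 16 * (1 - (y * √2 - x) ^ 4) := by
  -- `(x + y√2)(y√2 - x) = 1` and `(x + y√2)² - (y√2 - x)² = 4√2 xy`
  linear_combination (1 / 16) *
    ((-4 * x * y * (y * √2 - x) ^ 2 + √2 * ((x + y * √2) * (y * √2 - x) + 1) * y ^ 2) * sqrt_two_sq
      - √2 * ((x + y * √2) * (y * √2 - x) + 1) * h)

lemma coe_sqrt_two_mul_sub_sq {x y : ℕ} (h : x ^ 2 + 1 = 2 * y ^ 2) (b : ℕ) :
    ((√2 * ((x : ℝ) * y - b) ^ 2 : ℝ) : UnitAddCircle) =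
      ((√2 * b ^ 2 + 1 / 2 - ((x : ℝ) * y / 2 - b) * (y * √2 - x) ^ 2 : ℝ) : UnitAddCircle) := by
  obtain ⟨m, hm⟩ := Nat.odd_mul_of_sq_add_one_eq_two_mul_sq h
  have hR : (x : ℝ) ^ 2 + 1 = 2 * y ^ 2 := by exact_mod_cast h
  have hmR : (x : ℝ) * y = 2 * m + 1 := by exact_mod_cast hm
  have hdiff : √2 * ((x : ℝ) * y - b) ^ 2 =
      √2 * b ^ 2 + 1 / 2 - ((x : ℝ) * y / 2 - b) * (y * √2 - x) ^ 2 +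
        ((x ^ 3 * y - (2 * x ^ 2 + 1) * b + m : ℤ) : ℝ) := by
    push_cast
    linear_combination
      ((x * y / 2 - b) * y ^ 2) * sqrt_two_sq - (x * y / 2 - b) * hR + (1 / 2) * hmR
  rw [hdiff, AddCircle.coe_add, add_eq_left]
  exact (AddCircle.coe_eq_zero_iff 1).2 ⟨_, zsmul_one _⟩

lemma one_fourth_lt_norm_add_norm {x y a b : ℕ} (h : x ^ 2 + 1 = 2 * y ^ 2)
    (hab : a + b = x * y) (hba : b ≤ a) :
    1 / 4 < ‖((√2 * a ^ 2 : ℝ) : UnitAddCircle)‖ + ‖((√2 * b ^ 2 : ℝ) : UnitAddCircle)‖ := by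
  set c := ((x : ℝ) * y / 2 - b) * (y * √2 - x) ^ 2 with hc
  have habR : (a : ℝ) = x * y - b := by rw [eq_sub_iff_add_eq]; exact_mod_cast hab
  have hbaR : (b : ℝ) ≤ a := by exact_mod_cast hba
  have hc₀ : 0 ≤ c := mul_nonneg (by linarith) (sq_nonneg _)
  have hc₁ : c ≤ √2 / 16 := by
    have hxy := mul_mul_sq_sub_div_two (x := x) (y := y) (by exact_mod_cast h)
    have : 0 ≤ √2 * (y * √2 - x) ^ 4 := by positivity
    nlinarith [mul_nonneg b.cast_nonneg (sq_nonneg ((y : ℝ) * √2 - x))]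
  have hshift : ((√2 * a ^ 2 : ℝ) : UnitAddCircle) =
      ((√2 * b ^ 2 - c : ℝ) : UnitAddCircle) + ((1 / 2 : ℝ) : UnitAddCircle) := by
    rw [habR, coe_sqrt_two_mul_sub_sq h b, hc, ← AddCircle.coe_add]
    congr 1
    ring
  have hhalf : ‖((1 / 2 : ℝ) : UnitAddCircle)‖ = 1 / 2 := by
    simpa using AddCircle.norm_half_period_eq (1 : ℝ)
  have h₁ : 1 / 2 ≤ ‖((√2 * a ^ 2 : ℝ) : UnitAddCircle)‖ +
      ‖((√2 * b ^ 2 - c : ℝ) : UnitAddCircle)‖ := by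
    rw [← hhalf, eq_sub_of_add_eq' hshift.symm]
    exact norm_sub_le _ _
  have h₂ : ‖((√2 * b ^ 2 - c : ℝ) : UnitAddCircle)‖ ≤
      ‖((√2 * b ^ 2 : ℝ) : UnitAddCircle)‖ + c := by
    rw [AddCircle.coe_sub]
    refine (norm_sub_le _ _).trans (add_le_add_right ?_ _)
    exact QuotientAddGroup.norm_mk_le_norm.trans_eq (Real.norm_of_nonneg hc₀)
  linarith [Real.sqrt_two_lt_three_halves]

lemma coe_sqrt_two_mul_sq_add_ne_zero (k : ℕ) :
    ((√2 * k ^ 2 + 1 / 2 - √2 / 16 : ℝ) : UnitAddCircle) ≠ 0 := by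
  have hk : (k : ℚ) ^ 2 - 1 / 16 ≠ 0 := by
    intro h
    have : 16 * k ^ 2 = 1 := by exact_mod_cast (by linarith : (16 * k ^ 2 : ℚ) = 1)
    omega
  have hirr : Irrational (√2 * ((k ^ 2 - 1 / 16 : ℚ) : ℝ) + ((1 / 2 : ℚ) : ℝ)) :=
    (irrational_sqrt_two.mul_ratCast hk).add_ratCast _
  rw [Ne, AddCircle.coe_eq_zero_iff]
  rintro ⟨n, hn⟩
  refine hirr.ne_int n ?_
  rw [← zsmul_one, hn]
  push_cast
  ring

def pellPair : ℕ → ℕ × ℕ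
  | 0 => (1, 1)
  | i + 1 => (3 * (pellPair i).1 + 4 * (pellPair i).2, 2 * (pellPair i).1 + 3 * (pellPair i).2)

namespace pellPair

lemma fst_sq_add_one (i : ℕ) : (pellPair i).1 ^ 2 + 1 = 2 * (pellPair i).2 ^ 2 := by
  induction i with
  | zero => rfl
  | succ i ih => simp only [pellPair]; zify at ih ⊢; linear_combination ih

lemma lt_fst (i : ℕ) : i < (pellPair i).1 := by
  induction i with
  | zero => decide
  | succ i ih => simp only [pellPair]; omega

lemma snd_pos (i : ℕ) : 0 < (pellPair i).2 :=
  Nat.pos_of_ne_zero fun h => by simpa [h] using fst_sq_add_one i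

lemma fst_add_snd_mul_sqrt_two (i : ℕ) :
    ((pellPair i).1 : ℝ) + (pellPair i).2 * √2 = (1 + √2) ^ (2 * i + 1) := by
  induction i with
  | zero => simp [pellPair]
  | succ i ih =>
    rw [show 2 * (i + 1) + 1 = 2 * i + 1 + 2 by ring, pow_add, ← ih]
    simp only [pellPair]; push_cast
    linear_combination
      (-((pellPair i).1 : ℝ) - 2 * (pellPair i).2 - (pellPair i).2 * √2) * sqrt_two_sq

lemma snd_mul_sqrt_two_sub_fst (i : ℕ) :
    (pellPair i).2 * √2 - (pellPair i).1 = (√2 - 1) ^ (2 * i + 1) := by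
  induction i with
  | zero => simp [pellPair]
  | succ i ih =>
    rw [show 2 * (i + 1) + 1 = 2 * i + 1 + 2 by ring, pow_add, ← ih]
    simp only [pellPair]; push_cast
    linear_combination
      (((pellPair i).1 : ℝ) + 2 * (pellPair i).2 - (pellPair i).2 * √2) * sqrt_two_sq

lemma nval_eq (i : ℕ) : Nval i = (pellPair i).1 * (pellPair i).2 := by
  have h₁ : 3 + 2 * √2 = (1 + √2) ^ 2 := by linear_combination -sqrt_two_sq
  have h₂ : 3 - 2 * √2 = (√2 - 1) ^ 2 := by linear_combination -sqrt_two_sq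
  rw [Nval, h₁, h₂, pow_right_comm, pow_right_comm (√2 - 1), ← fst_add_snd_mul_sqrt_two,
    ← snd_mul_sqrt_two_sub_fst]
  field_simp
  ring

lemma tendsto_fst_mul_snd : Tendsto (fun i => (pellPair i).1 * (pellPair i).2) atTop atTop :=
  tendsto_atTop_mono (fun i => (lt_fst i).le.trans (Nat.le_mul_of_pos_right _ (snd_pos i)))
    tendsto_id

lemma tendsto_snd_mul_sqrt_two_sub_fst :
    Tendsto (fun i => ((pellPair i).2 * √2 - (pellPair i).1 : ℝ)) atTop (𝓝 0) := by
  simp_rw [snd_mul_sqrt_two_sub_fst]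
  have h₀ : 0 ≤ √2 - 1 := by linarith [Real.one_lt_sqrt_two]
  have h₁ : √2 - 1 < 1 := by linarith [Real.sqrt_two_lt_three_halves]
  exact (tendsto_pow_atTop_nhds_zero_of_lt_one h₀ h₁).comp
    (tendsto_atTop_mono (fun i => (by omega : i ≤ 2 * i + 1)) tendsto_id)

lemma tendsto_coe_sqrt_two_mul_fst_mul_snd_sub_sq (k : ℕ) :
    Tendsto (fun i => ((√2 * ((pellPair i).1 * (pellPair i).2 - k : ℝ) ^ 2 : ℝ) : UnitAddCircle))
      atTop (𝓝 ((√2 * k ^ 2 + 1 / 2 - √2 / 16 : ℝ) : UnitAddCircle)) := by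
  have hc (i : ℕ) : (((pellPair i).1 : ℝ) * (pellPair i).2 / 2 - k) *
      ((pellPair i).2 * √2 - (pellPair i).1) ^ 2 =
      √2 / 16 * (1 - ((pellPair i).2 * √2 - (pellPair i).1) ^ 4) -
        k * ((pellPair i).2 * √2 - (pellPair i).1) ^ 2 := by
    linear_combination mul_mul_sq_sub_div_two (x := (pellPair i).1) (y := (pellPair i).2)
      (by exact_mod_cast fst_sq_add_one i)
  simp_rw [coe_sqrt_two_mul_sub_sq (fst_sq_add_one _) k, hc]
  have hcont : Continuous fun δ : ℝ =>
      ((√2 * k ^ 2 + 1 / 2 - (√2 / 16 * (1 - δ ^ 4) - k * δ ^ 2) : ℝ) : UnitAddCircle) :=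
    continuous_quotient_mk'.comp (by fun_prop)
  convert (hcont.tendsto 0).comp tendsto_snd_mul_sqrt_two_sub_fst using 2
  all_goals exact congrArg _ (by ring)

lemma eventually_fst_mul_snd_sub_notMem_A {ε : ℕ → ℝ} (hε : Tendsto ε atTop (𝓝 0)) (k : ℕ) :
    ∀ᶠ i in atTop, (pellPair i).1 * (pellPair i).2 - k ∉ A ε √2 := by
  have hL := norm_pos_iff.2 (coe_sqrt_two_mul_sq_add_ne_zero k)
  have hgap := ((tendsto_coe_sqrt_two_mul_fst_mul_snd_sub_sq k).norm.sub
    (hε.comp ((tendsto_sub_atTop_nat k).comp tendsto_fst_mul_snd))).eventually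
      (lt_mem_nhds (by rwa [sub_zero]))
  filter_upwards [hgap, tendsto_fst_mul_snd.eventually_ge_atTop k] with i hi hk
  rw [mem_A_iff, Nat.cast_sub hk, Nat.cast_mul, not_le]
  simpa [sub_pos] using hi

end pellPair

theorem stmt_4 (ε : ℕ → ℝ) (hε : Tendsto ε atTop (nhds 0)) :
    (∀ i : ℕ, ∃ n : ℕ, 0 < n ∧ Odd n ∧ (n : ℝ) = Nval i) ∧
    {i : ℕ | ¬ ∃ n₁ ∈ A ε (Real.sqrt 2), ∃ n₂ ∈ A ε (Real.sqrt 2),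
      ((n₁ + n₂ : ℕ) : ℝ) = Nval i}.Infinite := by
  have hodd (i : ℕ) := Nat.odd_mul_of_sq_add_one_eq_two_mul_sq (pellPair.fst_sq_add_one i)
  refine ⟨fun i => ⟨_, (hodd i).pos, hodd i, by rw [pellPair.nval_eq, Nat.cast_mul]⟩, ?_⟩
  obtain ⟨K, hK⟩ :=
    eventually_atTop.1 (hε.eventually (gt_mem_nhds (by norm_num : (0 : ℝ) < 1 / 8)))
  have hsmall : ∀ᶠ i in atTop, ∀ k ∈ Set.Iio K, (pellPair i).1 * (pellPair i).2 - k ∉ A ε √2 :=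
    (eventually_all_finite (Set.finite_Iio K)).2
      fun k _ => pellPair.eventually_fst_mul_snd_sub_notMem_A hε k
  refine Nat.frequently_atTop_iff_infinite.1 (hsmall.mono fun i hi => ?_).frequently
  rintro ⟨n₁, h₁, n₂, h₂, hsum⟩
  rw [pellPair.nval_eq, ← Nat.cast_mul, Nat.cast_inj] at hsum
  wlog h : n₂ ≤ n₁ generalizing n₁ n₂
  · exact this n₂ h₂ n₁ h₁ (by omega) (by omega)
  rcases lt_or_ge n₂ K with hbK | hKb
  · exact hi n₂ hbK (by rwa [← hsum, Nat.add_sub_cancel])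
  · have := one_fourth_lt_norm_add_norm (pellPair.fst_sq_add_one i) hsum h
    rw [mem_A_iff] at h₁ h₂
    linarith [hK n₁ (hKb.trans h), hK n₂ hKb]
end

section
/- Let d be a positive integer that is not a perfect square and let α = a/c + (b/c)·√d with a, b, c integers, c ≠ 0, b ≠ 0 (so α ∈ ℚ(√d) \ ℚ). Then there exists ε₁ = ε₁(α) > 0 such that the following holds: if either (ε(n) ≤ ε₀ for all n for some ε₀ < ε₁) or (ε(n) → 0 as n → ∞), then A(ε,α) is not a basis of order 2. -/
open Filter
open scoped Pointwise

/-!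
Put `s = |b| √d`. Since `c α - a = b √d = ± s`, we have `‖s n²‖ ≤ |c| ‖α n²‖`, so it suffices to
treat `s`, whose square is the non-square integer `D = b² d`.

Let `x² - D y² = 1` with `x, y > 0` and `y = 2^e o`, `o` odd, and put `r = x + y s`, so that
`y s = x - 1/r`. If `m + n = o`, then `s (n² - m²) = s (n - m) o = ((n - m) x - (n - m)/r) / 2^e`
with `(n - m) x` odd, hence `‖s m²‖ + ‖s n²‖ ≥ 2^(-e) - 1/(2 s 4^e)`. Solutions with a fixed `e`
and `o → ∞` are the powers `a^(jT + 2)` of the fundamental solution `a`, where `2^e ∥ y(a²)` and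
`T` is a period of the powers of `a` modulo `2^(e+1)`. This settles the case `ε ≤ ε₀`.

If `ε → 0`, a representation `o = m + n` by elements of `A` must have `m` (or `n`) bounded. For
fixed `m`, `2^e s n² ≡ 2^e s m² - (o - 2m)/r (mod 1)` and `o/r → 1/(2^(e+1) s)`, so `‖s n²‖` stays
above a positive constant, because `2^e s m² - 1/(2^(e+1) s)` is irrational.
-/

lemma fpa_le_abs_sub (x : ℝ) (z : ℤ) : fpa x ≤ |x - z| := round_le x z

lemma fpa_le_abs (x : ℝ) : fpa x ≤ |x| := by simpa using fpa_le_abs_sub x 0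

lemma fpa_pos_of_irrational {x : ℝ} (h : Irrational x) : 0 < fpa x :=
  abs_pos.2 (sub_ne_zero.2 (h.ne_int _))

lemma fpa_neg_le (x : ℝ) : fpa (-x) ≤ fpa x := by
  refine (fpa_le_abs_sub _ (-round x)).trans_eq ?_
  rw [Int.cast_neg, fpa, ← abs_neg]
  ring_nf

lemma fpa_neg (x : ℝ) : fpa (-x) = fpa x :=
  (fpa_neg_le x).antisymm (by simpa using fpa_neg_le (-x))

lemma fpa_sub_intCast (x : ℝ) (z : ℤ) : fpa (x - z) = fpa x := by
  simp only [fpa, round_sub_intCast, Int.cast_sub, sub_sub_sub_cancel_right]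

lemma fpa_add_le (x y : ℝ) : fpa (x + y) ≤ fpa x + fpa y := by
  refine (fpa_le_abs_sub _ (round x + round y)).trans ?_
  rw [Int.cast_add, add_sub_add_comm]
  exact abs_add_le _ _

lemma fpa_sub_le (x y : ℝ) : fpa (x - y) ≤ fpa x + fpa y := by
  simpa only [sub_eq_add_neg, fpa_neg] using fpa_add_le x (-y)

lemma fpa_add_le_fpa_add_abs (x y : ℝ) : fpa (x + y) ≤ fpa x + |y| :=
  (fpa_add_le x y).trans (add_le_add_right (fpa_le_abs y) _)

lemma fpa_intCast_mul_le (k : ℤ) (x : ℝ) : fpa (k * x) ≤ |(k : ℝ)| * fpa x := by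
  refine (fpa_le_abs_sub _ (k * round x)).trans_eq ?_
  rw [Int.cast_mul, ← mul_sub, abs_mul, fpa]

lemma one_div_le_fpa_intCast_div {K q : ℤ} (hq : 0 < q) (hK : ¬ q ∣ K) :
    1 / (q : ℝ) ≤ fpa (K / q) := by
  have hq' : (0 : ℝ) < q := Int.cast_pos.2 hq
  have hne : K - q * round ((K : ℝ) / q) ≠ 0 := fun h => hK ⟨_, sub_eq_zero.1 h⟩
  have h1 : (1 : ℝ) ≤ |((K - q * round ((K : ℝ) / q) : ℤ) : ℝ)| := by
    exact_mod_cast Int.one_le_abs hne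
  rw [fpa, show (K : ℝ) / q - round ((K : ℝ) / q) = ((K - q * round ((K : ℝ) / q) : ℤ) : ℝ) / q by
    push_cast; field_simp, abs_div, abs_of_pos hq']
  exact div_le_div_of_nonneg_right h1 hq'.le

lemma one_div_two_pow_le_fpa_div {K : ℤ} (hK : Odd K) {e : ℕ} (he : 1 ≤ e) :
    1 / 2 ^ e ≤ fpa (K / 2 ^ e) := by
  have hdvd : ¬ (2 ^ e : ℤ) ∣ K := fun h =>
    Int.not_even_iff_odd.2 hK (even_iff_two_dvd.2 ((dvd_pow_self 2 (by omega)).trans h))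
  simpa using one_div_le_fpa_intCast_div (by positivity) hdvd

lemma exists_odd_eq_two_pow_mul_of_modEq {y w : ℤ} {e : ℕ} (hy : 0 < y) (hw : Odd w)
    (h : y ≡ 2 ^ e * w [ZMOD 2 ^ (e + 1)]) : ∃ o : ℕ, Odd o ∧ y = 2 ^ e * o := by
  obtain ⟨t, ht⟩ := h.symm.dvd
  have hy' : y = 2 ^ e * (w + 2 * t) := by linear_combination ht
  have hpos : 0 < w + 2 * t := pos_of_mul_pos_right (hy' ▸ hy) (by positivity)
  lift w + 2 * t to ℕ using hpos.le with o ho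
  refine ⟨o, ?_, hy'⟩
  have : Odd (o : ℤ) := ho ▸ hw.add_even (even_two_mul t)
  exact_mod_cast this

namespace Pell.Solution₁

variable {D : ℤ}

-- The matrix of multiplication by `x + y √D` on `ℤ[√D]` in the basis `1, √D`, reduced mod `n`.
def toMatrixMod (n : ℕ) : Solution₁ D →* Matrix (Fin 2) (Fin 2) (ZMod n) where
  toFun a := !![(a.x : ZMod n), D * a.y; a.y, a.x]
  map_one' := by simp [x_one, y_one, Matrix.one_fin_two]
  map_mul' a b := by
    simp only [Matrix.mul_fin_two, x_mul, y_mul, Int.cast_add, Int.cast_mul]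
    congr 1; ext i j; fin_cases i <;> fin_cases j <;> simp <;> ring

lemma toMatrixMod_apply_one_zero (n : ℕ) (a : Solution₁ D) : toMatrixMod n a 1 0 = a.y := rfl

lemma exists_pos_forall_y_pow_mul_add_modEq (a : Solution₁ D) {n : ℕ} (hn : n ≠ 0) (k : ℕ) :
    ∃ T > 0, ∀ j, (a ^ (j * T + k)).y ≡ (a ^ k).y [ZMOD n] := by
  have : NeZero n := ⟨hn⟩
  let φ := (toMatrixMod (D := D) n).toHomUnits
  refine ⟨orderOf (φ a), orderOf_pos _, fun j => ?_⟩
  have h : φ (a ^ (j * orderOf (φ a) + k)) = φ (a ^ k) := by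
    rw [pow_add, mul_comm j, pow_mul, map_mul, map_pow, map_pow, map_pow, pow_orderOf_eq_one,
      one_pow, one_mul]
  have hy : toMatrixMod n (a ^ (j * orderOf (φ a) + k)) 1 0 = toMatrixMod n (a ^ k) 1 0 := by
    rw [← MonoidHom.coe_toHomUnits, ← MonoidHom.coe_toHomUnits (toMatrixMod n) (a ^ k)]
    exact congrArg (fun M => M 1 0) (Units.ext_iff.1 h)
  rw [toMatrixMod_apply_one_zero, toMatrixMod_apply_one_zero] at hy
  exact (ZMod.intCast_eq_intCast_iff _ _ n).1 hy

lemma odd_x_of_even_y (a : Solution₁ D) (h : Even a.y) : Odd a.x := by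
  have : Odd (a.x ^ 2) := by
    rw [a.prop_x]
    exact ((h.pow_of_ne_zero two_ne_zero).mul_left D).one_add
  exact Int.odd_pow.1 this |>.resolve_right two_ne_zero

lemma exists_y_eq_two_pow_mul_odd (h₀ : 0 < D) (hD : ¬IsSquare D) :
    ∃ e ≥ 1, ∃ u : ℕ → Solution₁ D, ∃ o : ℕ → ℕ,
      StrictMono o ∧ ∀ j, 0 < (u j).x ∧ Odd (o j) ∧ (u j).y = 2 ^ e * o j := by
  obtain ⟨a, ha⟩ := IsFundamental.exists_of_not_isSquare h₀ hD
  have hY : (a ^ 2).y = 2 * (a.x * a.y) := by rw [sq, y_mul]; ring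
  have hYpos : 0 < (a ^ 2).y := y_pow_succ_pos ha.x_pos ha.2.1 1
  obtain ⟨e, w, hw, hYw⟩ := Nat.exists_eq_two_pow_mul_odd (n := (a ^ 2).y.toNat) (by omega)
  replace hYw : (a ^ 2).y = 2 ^ e * w := by
    rw [← Int.toNat_of_nonneg hYpos.le, hYw]; push_cast; rfl
  have he : 1 ≤ e := by
    obtain ⟨v, rfl⟩ := hw
    rcases Nat.eq_zero_or_pos e with rfl | he
    · push_cast at hYw; omega
    · exact he
  obtain ⟨T, hT, hTy⟩ :=
    a.exists_pos_forall_y_pow_mul_add_modEq (n := 2 ^ (e + 1)) (by positivity) 2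
  have hu : ∀ j, ∃ o : ℕ, Odd o ∧ (a ^ (j * T + 2)).y = 2 ^ e * o := fun j =>
    exists_odd_eq_two_pow_mul_of_modEq (y_pow_succ_pos ha.x_pos ha.2.1 _) (w := w)
      (by exact_mod_cast hw) (by simpa [hYw] using hTy j)
  choose o ho hyo using hu
  refine ⟨e, he, fun j => a ^ (j * T + 2), o, fun i j hij => ?_,
    fun j => ⟨x_pow_pos ha.x_pos _, ho j, hyo j⟩⟩
  have hlt := ha.y_strictMono (show ((i * T + 2 : ℕ) : ℤ) < (j * T + 2 : ℕ) by
    exact_mod_cast Nat.add_lt_add_right (Nat.mul_lt_mul_of_pos_right hij hT) 2)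
  simp only [zpow_natCast, hyo] at hlt
  exact_mod_cast lt_of_mul_lt_mul_left hlt (by positivity)

variable {s : ℝ} {u : Solution₁ D}

lemma one_lt_x_add_y_mul (hs : 0 < s) (hx : 0 < u.x) (hy : 0 < u.y) :
    1 < (u.x : ℝ) + u.y * s := by
  have : (1 : ℝ) ≤ u.x := by exact_mod_cast hx
  have : (0 : ℝ) < u.y := by exact_mod_cast hy
  nlinarith

lemma x_sub_y_mul_mul_x_add_y_mul (hs : s ^ 2 = D) :
    ((u.x : ℝ) - u.y * s) * (u.x + u.y * s) = 1 := by
  have := congrArg (Int.cast : ℤ → ℝ) u.prop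
  push_cast at this
  linear_combination this - (u.y : ℝ) ^ 2 * hs

lemma two_mul_y_mul_lt (hs : s ^ 2 = D) (hx : 0 < u.x) :
    2 * (u.y * s) < u.x + u.y * s := by
  have hprod := u.x_sub_y_mul_mul_x_add_y_mul hs
  have : (0 : ℝ) < u.x := by exact_mod_cast hx
  nlinarith

end Pell.Solution₁

section Estimates

variable {D : ℤ} {s : ℝ} {u : Pell.Solution₁ D}

lemma one_div_two_pow_sub_le_fpa_add_fpa (hs : s ^ 2 = D) (hs0 : 0 < s) (hx : 0 < u.x)
    {e o m n : ℕ} (he : 1 ≤ e) (ho : Odd o) (hyo : u.y = 2 ^ e * o) (hmn : m + n = o) :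
    1 / 2 ^ e - 1 / (2 * s * 4 ^ e) ≤ fpa (s * m ^ 2) + fpa (s * n ^ 2) := by
  have hy : (u.y : ℝ) = 2 ^ e * o := by exact_mod_cast hyo
  have hr1 := u.one_lt_x_add_y_mul hs0 hx (by rw [hyo]; have := ho.pos; positivity)
  set r := (u.x : ℝ) + u.y * s with hr
  have hprod : ((u.x : ℝ) - u.y * s) * r = 1 := u.x_sub_y_mul_mul_x_add_y_mul hs
  set k : ℤ := n - m with hk
  have hodd : Odd (k * u.x) := by
    refine Odd.mul ?_ (u.odd_x_of_even_y ?_)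
    · rw [show k = o - 2 * m by omega]
      exact (Int.odd_coe_nat o |>.2 ho).sub_even (even_two_mul _)
    · rw [hyo, ← Nat.sub_add_cancel he, pow_succ]
      exact (even_two.mul_left _).mul_right _
  have h1 : 1 / 2 ^ e ≤ fpa ((k * u.x : ℤ) / 2 ^ e) := one_div_two_pow_le_fpa_div hodd he
  have hkR : (k : ℝ) = n - m := by rw [hk]; push_cast; ring
  have ho' : (o : ℝ) = m + n := by push_cast [← hmn]; ring
  have hid : ((k * u.x : ℤ) : ℝ) / 2 ^ e = (s * n ^ 2 - s * m ^ 2) + k / (2 ^ e * r) := by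
    have : r ≠ 0 := by positivity
    push_cast
    rw [hkR]
    field_simp
    rw [hr, hy, ho'] at hprod ⊢
    linear_combination (n - m) * hprod
  have h2 : |(k : ℝ) / (2 ^ e * r)| ≤ 1 / (2 * s * 4 ^ e) := by
    have hko : |(k : ℝ)| ≤ o := by
      rw [hkR, ho', abs_le]
      constructor <;> linarith [m.cast_nonneg (α := ℝ), n.cast_nonneg (α := ℝ)]
    have hyr : 2 * s * (2 ^ e * o) < r := by nlinarith [u.two_mul_y_mul_lt hs hx]
    rw [abs_div, abs_of_pos (show (0 : ℝ) < 2 ^ e * r by positivity),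
      div_le_div_iff₀ (by positivity) (by positivity),
      show (4 : ℝ) ^ e = 2 ^ e * 2 ^ e by rw [← mul_pow]; norm_num]
    calc |(k : ℝ)| * (2 * s * (2 ^ e * 2 ^ e)) ≤ o * (2 * s * (2 ^ e * 2 ^ e)) := by gcongr
      _ = 2 * s * (2 ^ e * o) * 2 ^ e := by ring
      _ ≤ r * 2 ^ e := by gcongr
      _ = 1 * (2 ^ e * r) := by ring
  calc 1 / 2 ^ e - 1 / (2 * s * 4 ^ e) ≤ fpa ((k * u.x : ℤ) / 2 ^ e) - |(k : ℝ) / (2 ^ e * r)| := by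
        linarith
    _ ≤ fpa (s * n ^ 2 - s * m ^ 2) := by
        rw [hid]; linarith [fpa_add_le_fpa_add_abs (s * n ^ 2 - s * m ^ 2) (k / (2 ^ e * r))]
    _ ≤ fpa (s * m ^ 2) + fpa (s * n ^ 2) := by linarith [fpa_sub_le (s * n ^ 2) (s * m ^ 2)]

lemma fpa_two_pow_mul_sub_le (hs : s ^ 2 = D) (hs1 : 1 ≤ s) (hx : 0 < u.x) {e o m n : ℕ}
    (ho : 0 < o) (hyo : u.y = 2 ^ e * o) (hmn : m + n = o) :
    fpa (2 ^ e * s * m ^ 2 - 1 / (2 * s * 2 ^ e)) ≤ 2 ^ e * fpa (s * n ^ 2) + (2 * m + 1) / o := by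
  have hy : (u.y : ℝ) = 2 ^ e * o := by exact_mod_cast hyo
  have ho' : (1 : ℝ) ≤ o := by exact_mod_cast ho
  have hs0 : 0 < s := by linarith
  have hr1 := u.one_lt_x_add_y_mul hs0 hx (by rw [hyo]; positivity)
  set r := (u.x : ℝ) + u.y * s with hr
  have hprod : ((u.x : ℝ) - u.y * s) * r = 1 := u.x_sub_y_mul_mul_x_add_y_mul hs
  have hor : (o : ℝ) ≤ r := by
    have : (o : ℝ) ≤ u.y := by
      rw [hy]; exact le_mul_of_one_le_left (by positivity) (one_le_pow₀ one_le_two)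
    nlinarith [u.two_mul_y_mul_lt hs hx]
  have ht : r⁻¹ / (2 * s * 2 ^ e) ≤ 1 := by
    have : r⁻¹ ≤ 1 := inv_le_one_of_one_le₀ hr1.le
    have : 1 ≤ 2 * s * 2 ^ e := by nlinarith [one_le_pow₀ (M₀ := ℝ) (n := e) one_le_two]
    exact div_le_one_of_le₀ (by linarith) (by positivity)
  have hid : 2 ^ e * s * m ^ 2 - 1 / (2 * s * 2 ^ e) =
      (2 ^ e * (s * n ^ 2) - ((u.x * (o - 2 * m) : ℤ) : ℝ)) +
        -((2 * m + r⁻¹ / (2 * s * 2 ^ e)) / r) := by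
    have : r ≠ 0 := by positivity
    push_cast
    field_simp
    rw [hr, hy, show (n : ℝ) = o - m by push_cast [← hmn]; ring]
    rw [hr, hy] at hprod
    linear_combination (2 * 2 ^ e * s * (o - 2 * m) * (u.x + 2 ^ e * o * s) - 1) * hprod
  calc fpa (2 ^ e * s * m ^ 2 - 1 / (2 * s * 2 ^ e))
      ≤ fpa (2 ^ e * (s * n ^ 2)) + |(2 * m + r⁻¹ / (2 * s * 2 ^ e)) / r| := by
        rw [hid, ← abs_neg]
        exact (fpa_add_le_fpa_add_abs _ _).trans_eq (by rw [fpa_sub_intCast])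
    _ ≤ 2 ^ e * fpa (s * n ^ 2) + (2 * m + 1) / o := by
        gcongr
        · simpa using fpa_intCast_mul_le (2 ^ e) (s * n ^ 2)
        · rw [abs_of_nonneg (by positivity)]
          gcongr

end Estimates

lemma fpa_two_pow_mul_sub_pos {D : ℤ} {s : ℝ} (hs : s ^ 2 = D) (hirr : Irrational s) (e m : ℕ) :
    0 < fpa (2 ^ e * s * m ^ 2 - 1 / (2 * s * 2 ^ e)) := by
  apply fpa_pos_of_irrational
  have hD : D ≠ 0 := by
    rintro rfl
    exact hirr.ne_zero (pow_eq_zero_iff two_ne_zero |>.1 (by simpa using hs))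
  have hK : (2 ^ (2 * e + 1) * D * m ^ 2 - 1 : ℤ) ≠ 0 := by
    intro h
    have : (2 : ℤ) ∣ 2 ^ (2 * e + 1) * D * m ^ 2 := ⟨2 ^ (2 * e) * D * m ^ 2, by ring⟩
    omega
  have hL : (2 ^ (e + 1) * D : ℤ) ≠ 0 := mul_ne_zero (by positivity) hD
  have heq : 2 ^ e * s * m ^ 2 - 1 / (2 * s * 2 ^ e) =
      ((2 ^ (2 * e + 1) * D * m ^ 2 - 1 : ℤ) : ℝ) * s / ((2 ^ (e + 1) * D : ℤ) : ℝ) := by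
    have : (D : ℝ) ≠ 0 := by exact_mod_cast hD
    have : s ≠ 0 := hirr.ne_zero
    push_cast
    field_simp
    linear_combination (2 ^ e * 2 : ℝ) * hs
  rw [heq]
  exact (hirr.intCast_mul hK).div_intCast hL

lemma not_eventually_mem_add_of_forall_le_add {f ε : ℕ → ℝ} {N : ℕ → ℕ} {δ : ℝ} (hδ : 0 < δ)
    (hN : Tendsto N atTop atTop) (hsum : ∀ j m n, m + n = N j → δ ≤ f m + f n)
    (hfar : ∀ m, ∃ c > 0, ∀ᶠ j in atTop, c ≤ f (N j - m))
    (hε : (∃ ε₀ < δ / 2, ∀ n, ε n ≤ ε₀) ∨ Tendsto ε atTop (nhds 0)) :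
    ¬ ∀ᶠ M in atTop, M ∈ {n | f n ≤ ε n} + {n | f n ≤ ε n} := by
  intro H
  have hNH := hN.eventually H
  rcases hε with ⟨ε₀, hε₀, hle⟩ | hlim
  · obtain ⟨j, hj⟩ := hNH.exists
    obtain ⟨m, hm, n, hn, hmn⟩ := Set.mem_add.1 hj
    linarith [hsum j m n hmn, hle m, hle n, show f m ≤ ε m from hm, show f n ≤ ε n from hn]
  obtain ⟨M₁, hM₁⟩ := eventually_atTop.1 (hlim.eventually (gt_mem_nhds (half_pos hδ)))
  have hfar' : ∀ m, ∀ᶠ j in atTop, m ≤ N j ∧ ε (N j - m) < f (N j - m) := by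
    intro m
    obtain ⟨c, hc, hcj⟩ := hfar m
    have hεc := ((tendsto_sub_atTop_nat m).comp hN).eventually (hlim.eventually (gt_mem_nhds hc))
    filter_upwards [hN.eventually_ge_atTop m, hεc, hcj] with j hmj hεj hcj
    exact ⟨hmj, hεj.trans_le hcj⟩
  obtain ⟨j, hjA, hj⟩ := (hNH.and ((Finset.range M₁).eventually_all.2 fun m _ => hfar' m)).exists
  obtain ⟨m, hm, n, hn, hmn⟩ := Set.mem_add.1 hjA
  have hlarge : ∀ m n, m + n = N j → f m ≤ ε m → f n ≤ ε n → M₁ ≤ m := by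
    intro m n hmn hm hn
    by_contra! hlt
    obtain ⟨-, hlt⟩ := hj m (Finset.mem_range.2 hlt)
    rw [show N j - m = n by omega] at hlt
    linarith
  linarith [hsum j m n hmn, hM₁ m (hlarge m n hmn hm hn), hM₁ n (hlarge n m (by omega) hn hm),
    show f m ≤ ε m from hm, show f n ≤ ε n from hn]

theorem exists_not_eventually_mem_add_A_of_sq_eq {D : ℤ} {s : ℝ} (hs : s ^ 2 = D) (hs1 : 1 ≤ s)
    (hirr : Irrational s) :
    ∃ ε₁ > (0 : ℝ), ∀ ε : ℕ → ℝ, ((∃ ε₀ < ε₁, ∀ n, ε n ≤ ε₀) ∨ Tendsto ε atTop (nhds 0)) →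
      ¬ ∀ᶠ N : ℕ in atTop, N ∈ A ε s + A ε s := by
  have hD0 : 0 < D := by
    have : (1 : ℝ) ≤ D := by nlinarith
    exact_mod_cast this
  have hDsq : ¬ IsSquare D := by
    rw [← irrational_sqrt_intCast_iff_of_nonneg hD0.le, ← hs, Real.sqrt_sq (by linarith)]
    exact hirr
  obtain ⟨e, he, u, o, ho, hu⟩ := Pell.Solution₁.exists_y_eq_two_pow_mul_odd hD0 hDsq
  have hδ : 0 < 1 / 2 ^ e - 1 / (2 * s * 4 ^ e) := by
    have : (2 : ℝ) ^ e ≤ 4 ^ e := pow_le_pow_left₀ zero_le_two (by norm_num) e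
    have : (0 : ℝ) < 2 ^ e := by positivity
    exact sub_pos.2 (one_div_lt_one_div_of_lt (by positivity) (by nlinarith))
  refine ⟨_, half_pos hδ, fun ε hε =>
    not_eventually_mem_add_of_forall_le_add hδ ho.tendsto_atTop ?_ ?_ hε⟩
  · intro j m n hmn
    obtain ⟨hx, hodd, hy⟩ := hu j
    exact one_div_two_pow_sub_le_fpa_add_fpa hs (by linarith) hx he hodd hy hmn
  · intro m
    have hg := fpa_two_pow_mul_sub_pos hs hirr e m
    refine ⟨fpa (2 ^ e * s * m ^ 2 - 1 / (2 * s * 2 ^ e)) / 2 ^ (e + 1), by positivity, ?_⟩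
    have hsmall : ∀ᶠ j in atTop,
        (2 * m + 1) / (o j : ℝ) < fpa (2 ^ e * s * m ^ 2 - 1 / (2 * s * 2 ^ e)) / 2 :=
      ((tendsto_const_div_atTop_nhds_zero_nat _).comp ho.tendsto_atTop).eventually
        (gt_mem_nhds (half_pos hg))
    filter_upwards [ho.tendsto_atTop.eventually_ge_atTop (m + 1), hsmall] with j hmj hj
    obtain ⟨hx, -, hy⟩ := hu j
    have := fpa_two_pow_mul_sub_le hs hs1 hx (m := m) (by omega) hy (Nat.add_sub_cancel' (by omega))
    rw [div_le_iff₀ (by positivity), pow_succ (2 : ℝ) e]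
    linarith

lemma fpa_abs_mul_le {a b c : ℤ} {α t : ℝ} (h : c * α = a + b * t) (k : ℕ) :
    fpa (|(b : ℝ)| * t * k ^ 2) ≤ |(c : ℝ)| * fpa (α * k ^ 2) := by
  have hk : (b : ℝ) * t * k ^ 2 = c * (α * k ^ 2) - ((a * k ^ 2 : ℤ) : ℝ) := by
    push_cast
    linear_combination (-(k : ℝ) ^ 2) * h
  calc fpa (|(b : ℝ)| * t * k ^ 2) = fpa (b * t * k ^ 2) := by
        rcases abs_choice (b : ℝ) with hb | hb <;> rw [hb]
        rw [neg_mul, neg_mul, fpa_neg]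
    _ = fpa (c * (α * k ^ 2)) := by rw [hk, fpa_sub_intCast]
    _ ≤ |(c : ℝ)| * fpa (α * k ^ 2) := fpa_intCast_mul_le c _

lemma A_subset_A_abs_mul {a b c : ℤ} {α t : ℝ} (h : c * α = a + b * t) (ε : ℕ → ℝ) :
    A ε α ⊆ A (fun n => |(c : ℝ)| * ε n) (|(b : ℝ)| * t) := fun k hk =>
  (fpa_abs_mul_le h k).trans (mul_le_mul_of_nonneg_left hk (abs_nonneg _))

theorem stmt_5_general (d : ℕ) (hsq : ¬ IsSquare d)
    (a b c : ℤ) (hc : c ≠ 0) (hb : b ≠ 0)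
    (α : ℝ) (hα : α = (a : ℝ) / (c : ℝ) + ((b : ℝ) / (c : ℝ)) * Real.sqrt d) :
    ∃ ε₁ > (0 : ℝ), ∀ ε : ℕ → ℝ,
      ((∃ ε₀ < ε₁, ∀ n, ε n ≤ ε₀) ∨ Tendsto ε atTop (nhds 0)) →
      ¬ ∀ᶠ N : ℕ in atTop, N ∈ A ε α + A ε α := by
  have hd : (1 : ℝ) ≤ d := by
    have : d ≠ 0 := by rintro rfl; exact hsq ⟨0, rfl⟩
    exact_mod_cast Nat.one_le_iff_ne_zero.2 this
  have hcα : (c : ℝ) * α = a + b * √d := by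
    rw [hα]
    field_simp
  have hs : (|(b : ℝ)| * √d) ^ 2 = ((b ^ 2 * d : ℤ) : ℝ) := by
    push_cast
    rw [mul_pow, sq_abs, Real.sq_sqrt (by positivity)]
  have hs1 : 1 ≤ |(b : ℝ)| * √d :=
    one_le_mul_of_one_le_of_one_le (by exact_mod_cast Int.one_le_abs hb) (Real.one_le_sqrt.2 hd)
  have hirr : Irrational (|(b : ℝ)| * √d) := by
    simpa using (irrational_sqrt_natCast_iff.2 hsq).intCast_mul (abs_ne_zero.2 hb)
  obtain ⟨δ, hδ, hmain⟩ := exists_not_eventually_mem_add_A_of_sq_eq hs hs1 hirr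
  have hc0 : 0 < |(c : ℝ)| := abs_pos.2 (Int.cast_ne_zero.2 hc)
  have hA := A_subset_A_abs_mul hcα
  refine ⟨δ / |(c : ℝ)|, div_pos hδ hc0, fun ε hε H => hmain (fun n => |(c : ℝ)| * ε n) ?_
    (H.mono fun N hN => Set.add_subset_add (hA ε) (hA ε) hN)⟩
  rcases hε with ⟨ε₀, hlt, hle⟩ | hlim
  · exact Or.inl ⟨|(c : ℝ)| * ε₀, (lt_div_iff₀' hc0).1 hlt,
      fun n => mul_le_mul_of_nonneg_left (hle n) hc0.le⟩
  · exact Or.inr (by simpa using hlim.const_mul |(c : ℝ)|)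

theorem stmt_5 (d : ℕ) (hd : 0 < d) (hsq : ¬ IsSquare d)
    (a b c : ℤ) (hc : c ≠ 0) (hb : b ≠ 0)
    (α : ℝ) (hα : α = (a : ℝ) / (c : ℝ) + ((b : ℝ) / (c : ℝ)) * Real.sqrt d) :
    ∃ ε₁ > (0 : ℝ), ∀ ε : ℕ → ℝ,
      ((∃ ε₀ < ε₁, ∀ n, ε n ≤ ε₀) ∨ Tendsto ε atTop (nhds 0)) →
      ¬ ∀ᶠ N : ℕ in atTop, N ∈ A ε α + A ε α :=
  stmt_5_general d hsq a b c hc hb α hα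
end
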